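/- Fix β > 0, a finite W ⊂ Z^d, and deterministic coupling configurations J, J̄ ∈ ℝ^{E_d} that agree on every edge not in W*; write ΔJ_{xy} = J̄_{xy} − J_{xy} for {x,y} ∈ W* and H_{W,ΔJ}(σ) = Σ_{{x,y}∈W*} ΔJ_{xy} σ_x σ_y. Suppose that along a sequence of finite volumes Λ_{L_k} ↑ Z^d (with W ⊂ Λ_{L_1}) the product measures ∏_{i∈ℕ} G_{Λ_{L_k},β,J}(dσ^i) converge in finite-dimensional distributions to a measure M_J on S^ℕ, and likewise ∏_{i∈ℕ} G_{Λ_{L_k},β,J̄}(dσ^i) converge to M_{J̄}. Then for every s ∈ ℕ and every bounded continuous F on S^s, M_{J̄}(F(σ^1,…,σ^s)) = M_J( e^{β Σ_{i=1}^s H_{W,ΔJ}(σ^i)} F(σ^1,…,σ^s) ) / M_J( ∏_{i=1}^s e^{β H_{W,ΔJ}(σ^i)} ). -/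

import Mathlib

open MeasureTheory ProbabilityTheory Filter
open scoped ENNReal

noncomputable section

/-- Sites of `ℤ^d`. -/
abbrev Site (d : ℕ) := Fin d → ℤ
/-- Spin configurations on `ℤ^d`: `S = {−1,+1}^{ℤ^d}`, with `Bool` coding spins. -/
abbrev Config (d : ℕ) := Site d → Bool
/-- Nearest-neighbour edges of `ℤ^d`, parametrized by (site, direction). -/
abbrev Edge (d : ℕ) := Site d × Fin d

/-- The spin value `±1` of a Boolean. -/
def spin (b : Bool) : ℝ := if b then 1 else -1

/-- Second endpoint of an edge. -/
def ep2 {d : ℕ} (e : Edge d) : Site d := fun j => e.1 j + if j = e.2 then 1 else 0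

/-- The box `Λ_L = {−L,…,L}^d`. -/
def box (d L : ℕ) : Finset (Site d) := Fintype.piFinset fun _ => Finset.Icc (-(L : ℤ)) (L : ℤ)

/-- `W*`: the edges with both endpoints in `W`. -/
def edgesIn {d : ℕ} (W : Finset (Site d)) : Finset (Edge d) :=
  (W ×ˢ (Finset.univ : Finset (Fin d))).filter fun e => ep2 e ∈ W

/-- `∑_{e ∈ E} J_e σ_x σ_y`, the (negative of the) Hamiltonian restricted to edge set `E`. -/
def energy {d : ℕ} (E : Finset (Edge d)) (J : Edge d → ℝ) (σ : Config d) : ℝ :=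
  ∑ e ∈ E, J e * spin (σ e.1) * spin (σ (ep2 e))

/-- Extend a configuration on `Λ` to `ℤ^d` by `+1` outside `Λ`. -/
def extendConfig {d : ℕ} (Λ : Finset (Site d)) (σ : ↥Λ → Bool) : Config d :=
  fun x => if h : x ∈ Λ then σ ⟨x, h⟩ else true

/-- Finite-volume Gibbs-type measure on `S` for a weight `w`, supported on configurations
equal to `+1` off `Λ`. -/
def finGibbs {d : ℕ} (Λ : Finset (Site d)) (w : Config d → ℝ) : Measure (Config d) :=
  (∑ σ : ↥Λ → Bool, ENNReal.ofReal (w (extendConfig Λ σ)))⁻¹ •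
    ∑ σ : ↥Λ → Bool, ENNReal.ofReal (w (extendConfig Λ σ)) • Measure.dirac (extendConfig Λ σ)

/-- The EA Gibbs measure `G_{Λ,β,J}` (free boundary conditions), regarded as a measure on `S`. -/
def eaGibbs {d : ℕ} (Λ : Finset (Site d)) (β : ℝ) (J : Edge d → ℝ) : Measure (Config d) :=
  finGibbs Λ fun σ => Real.exp (β * energy (edgesIn Λ) J σ)

/-- `ν` is the product over the index set of standard Gaussians: all finite-dimensional
marginals are standard Gaussian product measures. -/
def stdGaussianProduct {ι : Type} (ν : Measure (ι → ℝ)) : Prop :=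
  IsProbabilityMeasure ν ∧
    ∀ A : Finset ι, ν.map (fun J (e : ↥A) => J ↑e) = Measure.pi fun _ : ↥A => gaussianReal 0 1

/-- The limit edge overlap `R^W` in the window `W`. -/
def overlapW {d : ℕ} (W : Finset (Site d)) (σ σ' : Config d) : ℝ :=
  ((edgesIn W).card : ℝ)⁻¹ *
    ∑ e ∈ edgesIn W, spin (σ e.1) * spin (σ (ep2 e)) * spin (σ' e.1) * spin (σ' (ep2 e))

/-- The limit edge overlap `R = lim_L R^{Λ_L}` (defined via `limUnder`; it equals the limit
whenever the limit exists). -/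
def overlap (d : ℕ) (σ σ' : Config d) : ℝ :=
  limUnder atTop fun L => overlapW (box d L) σ σ'

/-- The index set of pairs `1 ≤ i < j ≤ s` of replicas. -/
abbrev Pairs (s : ℕ) := {p : Fin s × Fin s // p.1 < p.2}

/-- The finite product of standard Gaussians. -/
def gaussPi (ι : Type) [Fintype ι] : Measure (ι → ℝ) := Measure.pi fun _ => gaussianReal 0 1

/-- Extend a family of couplings indexed by a finite edge set by `0`. -/
def extendE {d : ℕ} (E : Finset (Edge d)) (J : ↥E → ℝ) : Edge d → ℝ :=
  fun e => if h : e ∈ E then J ⟨e, h⟩ else 0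

/-- Translation `T_a` acting on configurations: `(T_a σ)_x = σ_{x+a}`. -/
def trC {d : ℕ} (a : Site d) (σ : Config d) : Config d := fun x => σ (x + a)

/-- Translation `T_a` acting on couplings: `(T_a J)_{{x,y}} = J_{{x+a,y+a}}`. -/
def trJ {d : ℕ} (a : Site d) (J : Edge d → ℝ) : Edge d → ℝ := fun e => J (e.1 + a, e.2)

/-!
Since `J` and `J̄` differ only on `W*`, on every box `Λ ⊇ W` the Gibbs weight of `J̄` is the
weight of `J` times `ψ = exp (β H_{W,ΔJ})`. Hence the `s`-replica Gibbs measure of `J̄` is the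
replica measure of `J` tilted by `∏ ψ(σ^i)` and renormalized, i.e.
`G_J̄^{⊗s}(F) · G_J^{⊗s}(∏ ψ(σ^i)) = G_J^{⊗s}(∏ ψ(σ^i) · F)` exactly in finite volume. All three
integrands are continuous, so the identity passes to the limit, and the denominators stay above
the minimum of `∏ ψ(σ^i) > 0` over the compact space `S^s`, so one may divide.
-/

open Finset

section DiscreteMeasures

variable {X ι : Type*} [Fintype ι] [MeasurableSpace X]

lemma dirac_univ_pi (x : ι → X) {A : ι → Set X} (hA : ∀ i, MeasurableSet (A i)) :
    Measure.dirac x (Set.univ.pi A) = ∏ i, Measure.dirac (x i) (A i) := by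
  rw [Measure.dirac_apply' _ (MeasurableSet.univ_pi hA)]
  by_cases hx : x ∈ Set.univ.pi A
  · rw [Set.indicator_of_mem hx]
    simp_all
  · obtain ⟨i, hi⟩ : ∃ i, x i ∉ A i := by simpa using hx
    rw [Set.indicator_of_notMem hx, eq_comm]
    exact prod_eq_zero (mem_univ i) (by simp [Measure.dirac_apply' _ (hA i), hi])

variable {α : Type*} [Fintype α] [DecidableEq ι]

lemma pi_sum_smul_dirac (c : α → ℝ≥0∞) (hc : ∀ a, c a ≠ ∞) (f : α → X) :
    Measure.pi (fun _ : ι => ∑ a, c a • Measure.dirac (f a))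
      = ∑ x : ι → α, (∏ i, c (x i)) • Measure.dirac (fun i => f (x i)) := by
  have : IsFiniteMeasure (∑ a, c a • Measure.dirac (f a)) :=
    ⟨by simpa [Measure.finsetSum_apply] using fun a => (hc a).lt_top⟩
  refine Measure.pi_eq fun A hA => ?_
  simp only [Measure.finsetSum_apply, Measure.smul_apply, smul_eq_mul, dirac_univ_pi _ hA,
    Fintype.prod_sum, prod_mul_distrib]

lemma integral_pi_sum_smul_dirac [MeasurableSingletonClass X] (c : α → ℝ≥0∞)
    (hc : ∀ a, c a ≠ ∞) (f : α → X) (g : (ι → X) → ℝ) :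
    ∫ y, g y ∂Measure.pi (fun _ : ι => ∑ a, c a • Measure.dirac (f a))
      = ∑ x : ι → α, (∏ i, (c (x i)).toReal) * g (fun i => f (x i)) := by
  have hprod : ∀ x : ι → α, ∏ i, c (x i) ≠ ∞ := fun x =>
    (ENNReal.prod_lt_top fun i _ => (hc (x i)).lt_top).ne
  rw [pi_sum_smul_dirac c hc f, integral_finsetSum_measure fun x _ =>
    (integrable_dirac (by simp)).smul_measure (hprod x)]
  simp only [integral_smul_measure, integral_dirac, ENNReal.toReal_prod, smul_eq_mul]

end DiscreteMeasures

section FiniteVolume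

variable {d : ℕ} (Λ : Finset (Site d)) {w : Config d → ℝ}

lemma finGibbs_eq_sum_smul_dirac (hw : ∀ σ, 0 < w σ) :
    finGibbs Λ w = ∑ t, ENNReal.ofReal (w (extendConfig Λ t) / ∑ t', w (extendConfig Λ t')) •
      Measure.dirac (extendConfig Λ t) := by
  have hZ : 0 < ∑ t, w (extendConfig Λ t) := sum_pos (fun t _ => hw _) univ_nonempty
  rw [finGibbs, smul_sum]
  refine sum_congr rfl fun t _ => ?_
  rw [smul_smul, ENNReal.ofReal_div_of_pos hZ,
    ENNReal.ofReal_sum_of_nonneg fun t _ => (hw _).le, ENNReal.div_eq_inv_mul]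

variable {ι : Type*} [Fintype ι] [DecidableEq ι]

lemma integral_pi_finGibbs (hw : ∀ σ, 0 < w σ) (g : (ι → Config d) → ℝ) :
    ∫ X, g X ∂Measure.pi (fun _ : ι => finGibbs Λ w)
      = (∑ t : ι → Λ → Bool,
          (∏ i, w (extendConfig Λ (t i))) * g (fun i => extendConfig Λ (t i)))
        / ∏ _i : ι, ∑ t, w (extendConfig Λ t) := by
  rw [finGibbs_eq_sum_smul_dirac Λ hw,
    integral_pi_sum_smul_dirac _ (fun _ => ENNReal.ofReal_ne_top), sum_div]
  refine sum_congr rfl fun t _ => ?_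
  have hw' : ∀ t, 0 ≤ w (extendConfig Λ t) / ∑ t', w (extendConfig Λ t') := fun t =>
    div_nonneg (hw _).le (sum_nonneg fun _ _ => (hw _).le)
  simp only [ENNReal.toReal_ofReal (hw' _), prod_div_distrib]
  ring

lemma integral_pi_finGibbs_mul_weight (ψ : Config d → ℝ) (hw : ∀ σ, 0 < w σ)
    (hψ : ∀ σ, 0 < ψ σ) (F : (ι → Config d) → ℝ) :
    (∫ X, F X ∂Measure.pi (fun _ : ι => finGibbs Λ (w * ψ)))
        * ∫ X, ∏ i, ψ (X i) ∂Measure.pi (fun _ : ι => finGibbs Λ w)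
      = ∫ X, (∏ i, ψ (X i)) * F X ∂Measure.pi (fun _ : ι => finGibbs Λ w) := by
  have hZ : ∏ _i : ι, ∑ t, (w * ψ) (extendConfig Λ t)
      = ∑ t : ι → Λ → Bool,
          (∏ i, w (extendConfig Λ (t i))) * ∏ i, ψ (extendConfig Λ (t i)) := by
    simp only [Fintype.prod_sum, Pi.mul_apply, prod_mul_distrib]
  have hZpos : 0 < ∑ t : ι → Λ → Bool,
      (∏ i, w (extendConfig Λ (t i))) * ∏ i, ψ (extendConfig Λ (t i)) :=
    sum_pos (fun t _ => mul_pos (prod_pos fun i _ => hw _) (prod_pos fun i _ => hψ _))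
      univ_nonempty
  rw [integral_pi_finGibbs Λ (w := w * ψ) fun σ => mul_pos (hw σ) (hψ σ),
    integral_pi_finGibbs Λ hw, integral_pi_finGibbs Λ hw, hZ]
  simp only [Pi.mul_apply, prod_mul_distrib, mul_assoc]
  field_simp

lemma le_integral_pi_finGibbs (hw : ∀ σ, 0 < w σ) {g : (ι → Config d) → ℝ} {m : ℝ}
    (hm : ∀ X, m ≤ g X) : m ≤ ∫ X, g X ∂Measure.pi (fun _ : ι => finGibbs Λ w) := by
  have hZ : 0 < ∑ t, w (extendConfig Λ t) := sum_pos (fun t _ => hw _) univ_nonempty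
  rw [integral_pi_finGibbs Λ hw, le_div_iff₀ (prod_pos fun _ _ => hZ), Fintype.prod_sum, mul_sum]
  exact sum_le_sum fun t _ => by
    rw [mul_comm]
    exact mul_le_mul_of_nonneg_left (hm _) (prod_nonneg fun i _ => (hw _).le)

end FiniteVolume

section EdwardsAnderson

variable {d : ℕ}

lemma box_mono : Monotone (box d) := fun _ _ h =>
  Fintype.piFinset_subset _ _ fun _ => Icc_subset_Icc (by omega) (by omega)

lemma edgesIn_mono {W Λ : Finset (Site d)} (h : W ⊆ Λ) : edgesIn W ⊆ edgesIn Λ := by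
  intro e he
  simp only [edgesIn, mem_filter, mem_product] at he ⊢
  exact ⟨⟨h he.1.1, he.1.2⟩, h he.2⟩

@[fun_prop]
lemma continuous_energy (E : Finset (Edge d)) (J : Edge d → ℝ) :
    Continuous fun σ : Config d => energy E J σ := by
  have hspin : Continuous spin := continuous_of_discreteTopology
  unfold energy
  fun_prop

lemma energy_eq_add_of_subset {W E : Finset (Edge d)} {J J' : Edge d → ℝ} (hWE : W ⊆ E)
    (hJ : ∀ e ∉ W, J' e = J e) (σ : Config d) :
    energy E J' σ = energy E J σ + energy W (J' - J) σ := by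
  simp only [energy]
  rw [sum_subset hWE fun e _ he => by simp [hJ e he], ← sum_add_distrib]
  exact sum_congr rfl fun e _ => by simp only [Pi.sub_apply]; ring

variable {Λ W : Finset (Site d)} {β : ℝ} {J J' : Edge d → ℝ}

lemma eaGibbs_eq_finGibbs_mul (hWΛ : W ⊆ Λ) (hJ : ∀ e ∉ edgesIn W, J' e = J e) :
    eaGibbs Λ β J' = finGibbs Λ ((fun σ => Real.exp (β * energy (edgesIn Λ) J σ)) *
      fun σ => Real.exp (β * energy (edgesIn W) (J' - J) σ)) := by
  rw [eaGibbs]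
  congr 1
  funext σ
  rw [Pi.mul_apply, energy_eq_add_of_subset (edgesIn_mono hWΛ) hJ, mul_add, Real.exp_add]

lemma integral_pi_eaGibbs_change_couplings {ι : Type*} [Fintype ι] [DecidableEq ι]
    (hWΛ : W ⊆ Λ) (hJ : ∀ e ∉ edgesIn W, J' e = J e) (F : (ι → Config d) → ℝ) :
    (∫ X, F X ∂Measure.pi (fun _ : ι => eaGibbs Λ β J'))
        * ∫ X, ∏ i, Real.exp (β * energy (edgesIn W) (J' - J) (X i))
            ∂Measure.pi (fun _ : ι => eaGibbs Λ β J)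
      = ∫ X, Real.exp (β * ∑ i, energy (edgesIn W) (J' - J) (X i)) * F X
          ∂Measure.pi (fun _ : ι => eaGibbs Λ β J) := by
  simp_rw [eaGibbs_eq_finGibbs_mul hWΛ hJ, mul_sum, Real.exp_sum]
  exact integral_pi_finGibbs_mul_weight Λ _ (fun _ => Real.exp_pos _) (fun _ => Real.exp_pos _)
    F

end EdwardsAnderson

lemma eq_div_of_tendsto_mul {ι : Type*} {l : Filter ι} [l.NeBot] {a b c : ι → ℝ} {A B C m : ℝ}
    (ha : Tendsto a l (nhds A)) (hb : Tendsto b l (nhds B)) (hc : Tendsto c l (nhds C))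
    (habc : ∀ k, a k * b k = c k) (hm : 0 < m) (hbm : ∀ k, m ≤ b k) : A = C / B := by
  have hB : 0 < B := hm.trans_le (ge_of_tendsto' hb hbm)
  rw [eq_div_iff hB.ne']
  exact tendsto_nhds_unique (ha.mul hb) (hc.congr fun k => (habc k).symm)

theorem ea_limit_covariance_general (d : ℕ) (β : ℝ)
    (W : Finset (Site d)) (J Jbar : Edge d → ℝ)
    (hagree : ∀ e ∉ edgesIn W, Jbar e = J e)
    (L : ℕ → ℕ) (hL : StrictMono L) (hWL : W ⊆ box d (L 0))
    (MJ MJbar : Measure (ℕ → Config d))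
    (h1 : ∀ (m : ℕ) (g : (Fin m → Config d) → ℝ), Continuous g →
      Tendsto (fun k => ∫ σ, g σ ∂(Measure.pi fun _ : Fin m => eaGibbs (box d (L k)) β J))
        atTop (nhds (∫ σ, g (fun i => σ i.1) ∂MJ)))
    (h2 : ∀ (m : ℕ) (g : (Fin m → Config d) → ℝ), Continuous g →
      Tendsto (fun k => ∫ σ, g σ ∂(Measure.pi fun _ : Fin m => eaGibbs (box d (L k)) β Jbar))
        atTop (nhds (∫ σ, g (fun i => σ i.1) ∂MJbar))) :
    ∀ (s : ℕ) (F : (Fin s → Config d) → ℝ), Continuous F →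
      (∫ σ, F (fun i => σ i.1) ∂MJbar)
        = (∫ σ, Real.exp (β * ∑ i : Fin s, energy (edgesIn W) (Jbar - J) (σ i.1)) *
              F (fun i => σ i.1) ∂MJ)
          / ∫ σ, ∏ i : Fin s, Real.exp (β * energy (edgesIn W) (Jbar - J) (σ i.1)) ∂MJ := by
  intro s F hF
  have hD : Continuous fun X : Fin s → Config d =>
      ∏ i, Real.exp (β * energy (edgesIn W) (Jbar - J) (X i)) := by fun_prop
  have hN : Continuous fun X : Fin s → Config d =>
      Real.exp (β * ∑ i, energy (edgesIn W) (Jbar - J) (X i)) * F X := by fun_prop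
  obtain ⟨X₀, hX₀⟩ := hD.exists_forall_le (by simp)
  have hWΛ (k : ℕ) : W ⊆ box d (L k) := hWL.trans (box_mono (hL.monotone k.zero_le))
  exact eq_div_of_tendsto_mul (h2 s F hF) (h1 s _ hD) (h1 s _ hN)
    (fun k => integral_pi_eaGibbs_change_couplings (hWΛ k) hagree F)
    (prod_pos fun i _ => Real.exp_pos _)
    fun k => le_integral_pi_finGibbs _ (fun _ => Real.exp_pos _) hX₀

/-- covariance property of limits of EA Gibbs measures under a local change
of couplings.  Let `J` and `J̄` agree off `W*` and set `ΔJ = J̄ − J` on `W*`.  If along boxes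
`Λ_{L_k} ↑ ℤ^d` the replica measures of `G_{Λ_{L_k},β,J}` converge in finite-dimensional
distributions to `M_J` and those of `G_{Λ_{L_k},β,J̄}` to `M_{J̄}`, then for every `s` and
every bounded continuous `F` on `S^s`:
`M_{J̄}(F) = M_J(e^{βΣ_i H_{W,ΔJ}(σ^i)} F)/M_J(∏_i e^{βH_{W,ΔJ}(σ^i)})`. -/
theorem ea_limit_covariance (d : ℕ) (β : ℝ) (hβ : 0 < β)
    (W : Finset (Site d)) (J Jbar : Edge d → ℝ)
    (hagree : ∀ e ∉ edgesIn W, Jbar e = J e)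
    (L : ℕ → ℕ) (hL : StrictMono L) (hWL : W ⊆ box d (L 0))
    (MJ MJbar : Measure (ℕ → Config d))
    [IsProbabilityMeasure MJ] [IsProbabilityMeasure MJbar]
    (h1 : ∀ (m : ℕ) (g : (Fin m → Config d) → ℝ), Continuous g →
      Tendsto (fun k => ∫ σ, g σ ∂(Measure.pi fun _ : Fin m => eaGibbs (box d (L k)) β J))
        atTop (nhds (∫ σ, g (fun i => σ i.1) ∂MJ)))
    (h2 : ∀ (m : ℕ) (g : (Fin m → Config d) → ℝ), Continuous g →
      Tendsto (fun k => ∫ σ, g σ ∂(Measure.pi fun _ : Fin m => eaGibbs (box d (L k)) β Jbar))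
        atTop (nhds (∫ σ, g (fun i => σ i.1) ∂MJbar))) :
    ∀ (s : ℕ) (F : (Fin s → Config d) → ℝ), Continuous F →
      (∫ σ, F (fun i => σ i.1) ∂MJbar)
        = (∫ σ, Real.exp (β * ∑ i : Fin s, energy (edgesIn W) (Jbar - J) (σ i.1)) *
              F (fun i => σ i.1) ∂MJ)
          / ∫ σ, ∏ i : Fin s, Real.exp (β * energy (edgesIn W) (Jbar - J) (σ i.1)) ∂MJ :=
  ea_limit_covariance_general d β W J Jbar hagree L hL hWL MJ MJbar h1 h2
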